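/- Let Σ be a counting signature, let 𝔄 be a finitely branching chromatic structure interpreting Σ, let Π' and Π'' be disjoint nonempty sets of 1-types over Σ, and let Π = Π' ∪ Π''. Suppose B ⊆ A is both a Π'-group and a Π''-group (hence also a Π-group). Let J' be the number of distinct Π'-profiles realized in 𝔄 by the elements of B, and J'' the number of distinct Π''-profiles realized in 𝔄 by the elements of B. Then there exists a (Π,B)-approximation 𝔄'' to 𝔄 in which at most J' + J'' distinct Π-profiles are realized by the elements of B. -/

import Mathlib

/-- A counting signature: finite sets of unary and binary predicate symbols,
with a distinguished finite set of binary predicates (the counting predicates). -/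
structure CSig where
  U : Type
  B : Type
  [instU : Fintype U]
  [instDU : DecidableEq U]
  [instB : Fintype B]
  [instDB : DecidableEq B]
  counting : Finset B

attribute [instance] CSig.instU CSig.instDU CSig.instB CSig.instDB

/-- A structure interpreting a counting signature over domain `A`. -/
structure Struc (σ : CSig) (A : Type) where
  unary : σ.U → A → Bool
  binary : σ.B → A → A → Bool

/-- A 1-type over `σ`: a truth assignment to all literals in the single variable x. -/
structure OneType (σ : CSig) where
  u : σ.U → Bool
  d : σ.B → Bool
deriving DecidableEq, Fintype

/-- A 2-type over `σ`: a truth assignment to all equality-free literals in x, y. -/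
structure TwoType (σ : CSig) where
  ux : σ.U → Bool
  uy : σ.U → Bool
  dx : σ.B → Bool
  dy : σ.B → Bool
  rxy : σ.B → Bool
  ryx : σ.B → Bool
deriving DecidableEq

variable {σ : CSig} {A : Type}

/-- Explicit equivalence of `TwoType σ` with a product, giving finiteness. -/
def TwoType.equivProd (σ : CSig) :
    TwoType σ ≃ ((σ.U → Bool) × (σ.U → Bool) × (σ.B → Bool) × (σ.B → Bool) ×
      (σ.B → Bool) × (σ.B → Bool)) where
  toFun τ := ⟨τ.ux, τ.uy, τ.dx, τ.dy, τ.rxy, τ.ryx⟩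
  invFun p := ⟨p.1, p.2.1, p.2.2.1, p.2.2.2.1, p.2.2.2.2.1, p.2.2.2.2.2⟩
  left_inv τ := rfl
  right_inv p := rfl

instance : Fintype (TwoType σ) := Fintype.ofEquiv _ (TwoType.equivProd σ).symm

/-- The result of transposing x and y in a 2-type. -/
def TwoType.inv (τ : TwoType σ) : TwoType σ := ⟨τ.uy, τ.ux, τ.dy, τ.dx, τ.ryx, τ.rxy⟩

/-- The 1-type (of x) included in a 2-type. -/
def TwoType.tp1 (τ : TwoType σ) : OneType σ := ⟨τ.ux, τ.dx⟩

/-- tp₂(τ) = tp₁(τ⁻¹). -/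
def TwoType.tp2 (τ : TwoType σ) : OneType σ := ⟨τ.uy, τ.dy⟩

/-- The 1-type of an element. -/
def Struc.tp1 (S : Struc σ A) (a : A) : OneType σ :=
  ⟨fun p => S.unary p a, fun f => S.binary f a a⟩

/-- The 2-type of a pair of (distinct) elements. -/
def Struc.tp2 (S : Struc σ A) (a b : A) : TwoType σ :=
  ⟨fun p => S.unary p a, fun p => S.unary p b,
   fun f => S.binary f a a, fun f => S.binary f b b,
   fun f => S.binary f a b, fun f => S.binary f b a⟩

/-- A 2-type is a message-type if it contains f(x,y) for some counting predicate f. -/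
def IsMessage (σ : CSig) (τ : TwoType σ) : Prop := ∃ f ∈ σ.counting, τ.rxy f = true

instance : DecidablePred (IsMessage σ) := fun τ => by unfold IsMessage; infer_instance

/-- A message-type whose inverse is also a message-type. -/
def IsInvertible (σ : CSig) (τ : TwoType σ) : Prop := IsMessage σ τ ∧ IsMessage σ τ.inv

instance : DecidablePred (IsInvertible σ) := fun τ => by unfold IsInvertible; infer_instance

/-- A 2-type is silent if neither it nor its inverse is a message-type. -/
def IsSilent (σ : CSig) (τ : TwoType σ) : Prop := ¬ IsMessage σ τ ∧ ¬ IsMessage σ τ.inv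

/-- The (sub)type of message-types over σ. -/
def MsgType (σ : CSig) := {τ : TwoType σ // IsMessage σ τ}

instance : Fintype (MsgType σ) := Subtype.fintype _
instance : DecidableEq (MsgType σ) := fun a b => by
  unfold MsgType at a b; exact Subtype.instDecidableEq a b

/-- Y-branching: every element sends at most Y messages along each counting predicate. -/
def Struc.Branching (S : Struc σ A) (Y : ℕ) : Prop :=
  ∀ a : A, ∀ f ∈ σ.counting, {b : A | b ≠ a ∧ S.binary f a b = true}.encard ≤ (Y : ℕ∞)

def Struc.FinitelyBranching (S : Struc σ A) : Prop := ∃ Y : ℕ, S.Branching Y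

/-- Chromatic: distinct elements connected by a chain of 1 or 2 invertible
message-types have distinct 1-types. -/
def Struc.Chromatic (S : Struc σ A) : Prop :=
  (∀ a a' : A, a ≠ a' → IsInvertible σ (S.tp2 a a') → S.tp1 a ≠ S.tp1 a') ∧
  (∀ a a' a'' : A, a ≠ a' → a' ≠ a'' → a ≠ a'' →
     IsInvertible σ (S.tp2 a a') → IsInvertible σ (S.tp2 a' a'') → S.tp1 a ≠ S.tp1 a'')

/-- Z-differentiated: each 1-type is realized either at most once or more than Z times. -/
def Struc.Differentiated (S : Struc σ A) (Z : ℕ) : Prop :=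
  ∀ π : OneType σ, {a : A | S.tp1 a = π}.encard ≤ 1 ∨ (Z : ℕ∞) < {a : A | S.tp1 a = π}.encard

/-- π and π' form a noisy pair: no silent 2-type connects an element of 1-type π
to an element of 1-type π'. -/
def NoisyPair (S : Struc σ A) (π π' : OneType σ) : Prop :=
  ¬ ∃ a a' : A, a ≠ a' ∧ S.tp1 a = π ∧ S.tp1 a' = π' ∧ IsSilent σ (S.tp2 a a')

/-- The Π-profile of a: for each message-type μ, the number of elements b with 1-type
in Π such that tp[a,b] = μ. -/
noncomputable def Struc.pr (S : Struc σ A) (P : Set (OneType σ)) (a : A) : MsgType σ → ℕ∞ :=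
  fun μ => {b : A | b ≠ a ∧ S.tp1 b ∈ P ∧ S.tp2 a b = μ.1}.encard

/-- The Π-count of a: for each counting predicate f, the number of elements b ≠ a with
1-type in Π such that f[a,b] holds. -/
noncomputable def Struc.ct (S : Struc σ A) (P : Set (OneType σ)) (a : A) :
    {f : σ.B // f ∈ σ.counting} → ℕ∞ :=
  fun f => {b : A | b ≠ a ∧ S.tp1 b ∈ P ∧ S.binary f.1 a b = true}.encard

/-- A Π-group: all elements share the same 1-type and the same Π-count. -/
def PiGroup (S : Struc σ A) (P : Set (OneType σ)) (B : Set A) : Prop :=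
  ∀ a ∈ B, ∀ b ∈ B, S.tp1 a = S.tp1 b ∧ S.ct P a = S.ct P b

/-- A π-patch: a {π}-group all of whose elements have {π}-profiles agreeing on the
invertible message-types (the first M* coordinates). -/
def PiPatch (S : Struc σ A) (π : OneType σ) (B : Set A) : Prop :=
  PiGroup S {π} B ∧
  ∀ a ∈ B, ∀ b ∈ B, ∀ μ : MsgType σ, IsInvertible σ μ.1 → S.pr {π} a μ = S.pr {π} b μ

/-- τ is realized in S. -/
def Realizes2 (S : Struc σ A) (τ : TwoType σ) : Prop := ∃ a b : A, a ≠ b ∧ S.tp2 a b = τ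

/-- (Π,B)-approximation. -/
def PiBApprox (S S' : Struc σ A) (P : Set (OneType σ)) (B : Set A) : Prop :=
  S'.Chromatic ∧
  (∀ τ : TwoType σ, Realizes2 S' τ → Realizes2 S τ) ∧
  ∀ a : A,
    S'.tp1 a = S.tp1 a ∧
    S'.pr Pᶜ a = S.pr Pᶜ a ∧
    (a ∉ B → S'.pr Set.univ a = S.pr Set.univ a) ∧
    (a ∈ B → S'.ct P a = S.ct P a)
/-- A star-type: a 1-type together with a vector of multiplicities indexed by the
message-types. -/
structure StarType (σ : CSig) where
  tp : OneType σ
  v : MsgType σ → ℕ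
deriving DecidableEq

/-- The defining condition on star-types: v(μ) > 0 implies tp₁(μ) = π. -/
def StarType.IsValid (s : StarType σ) : Prop :=
  ∀ μ : MsgType σ, 0 < s.v μ → μ.1.tp1 = s.tp

/-- The star-type of an element: its 1-type together with its profile. -/
noncomputable def StarOf (S : Struc σ A) (a : A) : StarType σ where
  tp := S.tp1 a
  v := fun μ => ({b : A | b ≠ a ∧ S.tp2 a b = μ.1}.encard).toNat

/-- X-sparse: at most X distinct star-types are realized. -/
noncomputable def Struc.Sparse (S : Struc σ A) (X : ℕ) : Prop :=
  {st : StarType σ | ∃ a : A, StarOf S a = st}.encard ≤ (X : ℕ∞)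

/-- A chromatic star-type: for every 1-type π', the multiplicities of invertible
message-types μ with tp₂(μ) = π' sum to at most 1, and to 0 when π' = tp. -/
def StarType.Chromatic (s : StarType σ) : Prop :=
  ∀ π' : OneType σ,
    (∑ μ ∈ Finset.univ.filter (fun μ : MsgType σ => IsInvertible σ μ.1 ∧ μ.1.tp2 = π'),
        s.v μ) ≤ 1 ∧
    (π' = s.tp →
      (∑ μ ∈ Finset.univ.filter (fun μ : MsgType σ => IsInvertible σ μ.1 ∧ μ.1.tp2 = π'),
        s.v μ) = 0)

/-- A frame over σ: a finite set of (pairwise distinct) star-types, a set I of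
unordered pairs of 1-types, and a choice θ of a silent 2-type for each pair in I. -/
structure Frame (σ : CSig) where
  stars : Finset (StarType σ)
  valid : ∀ s ∈ stars, s.IsValid
  I : Set (Sym2 (OneType σ))
  θ : Sym2 (OneType σ) → TwoType σ
  hθ : ∀ p ∈ I, IsSilent σ (θ p) ∧ Sym2.mk (θ p).tp1 (θ p).tp2 = p

/-- Y-bounded frame: all star-type multiplicities are at most Y. -/
def Frame.Bounded (F : Frame σ) (Y : ℕ) : Prop :=
  ∀ s ∈ F.stars, ∀ μ : MsgType σ, s.v μ ≤ Y

/-- A chromatic frame: all its star-types are chromatic. -/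
def Frame.Chromatic (F : Frame σ) : Prop := ∀ s ∈ F.stars, s.Chromatic

/-- F describes S: the stars of F are exactly the realized star-types; I consists of the
non-noisy pairs of 1-types; and each θ-value is realized. -/
def Describes (F : Frame σ) (S : Struc σ A) : Prop :=
  (∀ st : StarType σ, st ∈ F.stars ↔ ∃ a : A, StarOf S a = st) ∧
  (∀ π π' : OneType σ, Sym2.mk π π' ∈ F.I ↔ ¬ NoisyPair S π π') ∧
  (∀ p ∈ F.I, ∃ a b : A, a ≠ b ∧ S.tp2 a b = F.θ p)

/-- The number M* of invertible message-types over σ. -/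
def MstarCard (σ : CSig) : ℕ :=
  (Finset.univ.filter (fun μ : MsgType σ => IsInvertible σ μ.1)).card

/-- p_{ik} = 1: the star-type sends no message to any element of 1-type π. -/
def PZero (s : StarType σ) (π : OneType σ) : Prop :=
  ∀ μ : MsgType σ, μ.1.tp2 = π → s.v μ = 0

instance (s : StarType σ) (π : OneType σ) : Decidable (PZero s π) := by
  unfold PZero; infer_instance

/-- r_{ik}: total multiplicity of non-invertible message-types with tp₂ = π. -/
def RCoeff (s : StarType σ) (π : OneType σ) : ℕ :=
  ∑ μ ∈ Finset.univ.filter (fun μ : MsgType σ => ¬ IsInvertible σ μ.1 ∧ μ.1.tp2 = π), s.v μ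

/-- s_{ik}: total multiplicity of message-types with tp₂ = π. -/
def SCoeff (s : StarType σ) (π : OneType σ) : ℕ :=
  ∑ μ ∈ Finset.univ.filter (fun μ : MsgType σ => μ.1.tp2 = π), s.v μ

/-- u_i = Σ_k o_{ik} w_k. -/
def Frame.uVal (F : Frame σ) (w : StarType σ → ℕ) (π : OneType σ) : ℕ :=
  ∑ s ∈ F.stars.filter (fun s => s.tp = π), w s

/-- v_j = Σ_k q_{jk} w_k. -/
def Frame.vVal (F : Frame σ) (w : StarType σ → ℕ) (μ : MsgType σ) : ℕ :=
  ∑ s ∈ F.stars, s.v μ * w s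

/-- x_{ii'} = Σ_k o_{ik} p_{i'k} w_k. -/
def Frame.xVal (F : Frame σ) (w : StarType σ → ℕ) (π π' : OneType σ) : ℕ :=
  ∑ s ∈ F.stars.filter (fun s => s.tp = π ∧ PZero s π'), w s

/-- w is a Z-solution of F (conditions C1–C6, over positive integers). -/
def IsZSolution (F : Frame σ) (Z : ℕ) (w : StarType σ → ℕ) : Prop :=
  (∀ s ∈ F.stars, 0 < w s) ∧
  (∀ μ μ' : MsgType σ, IsInvertible σ μ.1 → μ'.1 = μ.1.inv → F.vVal w μ = F.vVal w μ') ∧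
  (∀ π : OneType σ, ∀ s ∈ F.stars, SCoeff s π ≤ F.uVal w π) ∧
  (∀ π : OneType σ, F.uVal w π ≤ 1 ∨ Z < F.uVal w π) ∧
  (∀ π π' : OneType σ, ∀ s ∈ F.stars, s.tp = π →
     (1 < F.uVal w π ∨ RCoeff s π' ≤ F.xVal w π' π)) ∧
  (∀ π π' : OneType σ, Sym2.mk π π' ∉ F.I → F.uVal w π ≤ 1 ∨ F.uVal w π' ≤ 1) ∧
  (∀ π π' : OneType σ, ∀ s ∈ F.stars, Sym2.mk π π' ∉ F.I → s.tp = π →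
     (1 < F.uVal w π ∨ F.xVal w π' π ≤ RCoeff s π'))

/-- u_i over ℕ* = ℕ ∪ {ℵ₀}. -/
def Frame.uValE (F : Frame σ) (w : StarType σ → ℕ∞) (π : OneType σ) : ℕ∞ :=
  ∑ s ∈ F.stars.filter (fun s => s.tp = π), w s

/-- v_j over ℕ*. -/
def Frame.vValE (F : Frame σ) (w : StarType σ → ℕ∞) (μ : MsgType σ) : ℕ∞ :=
  ∑ s ∈ F.stars, (s.v μ : ℕ∞) * w s

/-- x_{ii'} over ℕ*. -/
def Frame.xValE (F : Frame σ) (w : StarType σ → ℕ∞) (π π' : OneType σ) : ℕ∞ :=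
  ∑ s ∈ F.stars.filter (fun s => s.tp = π ∧ PZero s π'), w s

/-- w is an extended Z-solution of F: a Z-solution over ℕ* = ℕ ∪ {ℵ₀}
(with nonzero components). -/
def IsExtZSolution (F : Frame σ) (Z : ℕ) (w : StarType σ → ℕ∞) : Prop :=
  (∀ s ∈ F.stars, w s ≠ 0) ∧
  (∀ μ μ' : MsgType σ, IsInvertible σ μ.1 → μ'.1 = μ.1.inv → F.vValE w μ = F.vValE w μ') ∧
  (∀ π : OneType σ, ∀ s ∈ F.stars, (SCoeff s π : ℕ∞) ≤ F.uValE w π) ∧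
  (∀ π : OneType σ, F.uValE w π ≤ 1 ∨ (Z : ℕ∞) < F.uValE w π) ∧
  (∀ π π' : OneType σ, ∀ s ∈ F.stars, s.tp = π →
     (1 < F.uValE w π ∨ (RCoeff s π' : ℕ∞) ≤ F.xValE w π' π)) ∧
  (∀ π π' : OneType σ, Sym2.mk π π' ∉ F.I → F.uValE w π ≤ 1 ∨ F.uValE w π' ≤ 1) ∧
  (∀ π π' : OneType σ, ∀ s ∈ F.stars, Sym2.mk π π' ∉ F.I → s.tp = π →
     (1 < F.uValE w π ∨ F.xValE w π' π ≤ (RCoeff s π' : ℕ∞)))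

/-- The data of a normal-form sentence φ*: a quantifier-free equality-free α(x)
(given semantically by the set of 1-types entailing it), a quantifier-free
equality-free β(x,y) (given by the set of 2-types entailing it), and positive
counts C_h for the counting predicates. -/
structure NormalForm (σ : CSig) where
  alpha : OneType σ → Prop
  beta : TwoType σ → Prop
  C : σ.B → ℕ
  hC : ∀ f ∈ σ.counting, 0 < C f

/-- S ⊨ φ*. -/
def SatNF (N : NormalForm σ) (S : Struc σ A) : Prop :=
  (∀ a : A, N.alpha (S.tp1 a)) ∧
  (∀ a b : A, a ≠ b → N.beta (S.tp2 a b)) ∧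
  (∀ f ∈ σ.counting, ∀ a : A,
     {b : A | b ≠ a ∧ S.binary f a b = true}.encard = (N.C f : ℕ∞))

/-- F ⊨ φ*. -/
def FrameSatNF (N : NormalForm σ) (F : Frame σ) : Prop :=
  (∀ s ∈ F.stars, N.alpha s.tp) ∧
  (∀ s ∈ F.stars, ∀ μ : MsgType σ, 0 < s.v μ → N.beta μ.1 ∧ N.beta μ.1.inv) ∧
  (∀ p ∈ F.I, N.beta (F.θ p) ∧ N.beta ((F.θ p).inv)) ∧
  (∀ s ∈ F.stars, ∀ f ∈ σ.counting,
     (∑ μ ∈ Finset.univ.filter (fun μ : MsgType σ => μ.1.rxy f = true), s.v μ) = N.C f)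

/-- The signature obtained from σ by adding k new unary predicates; the counting
predicates are unchanged. -/
def addUnary (σ : CSig) (k : ℕ) : CSig where
  U := σ.U ⊕ Fin k
  B := σ.B
  counting := σ.counting

/-- S' (interpreting σ with k extra unary predicates) is an expansion of S:
it agrees with S on all predicates of σ. -/
def IsExpansion {σ : CSig} {k : ℕ} {A : Type} (S' : Struc (addUnary σ k) A)
    (S : Struc σ A) : Prop :=
  (∀ (p : σ.U) (a : A), S'.unary (Sum.inl p) a = S.unary p a) ∧
  (∀ (f : σ.B) (a b : A), S'.binary f a b = S.binary f a b)

/-!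
Fix a permutation `ρ` of `B` and rewire `𝔄`: every `a ∈ B` takes over the connections of `ρ a`
to the elements whose 1-type lies in `Π''`, while its other connections stay. As `ρ` preserves
1-types, every new 2-type is the 2-type of a pair of distinct elements of `𝔄` with the same
1-types, so chromaticity and the realized 2-types survive; the `Π`-profile of `a ∈ B` becomes
`pr_Π'(a) + pr_Π''(ρ a)`, and its `Π`-count is unchanged because `B` is a `Π''`-group.

It remains to choose `ρ` so that the pairs `(pr_Π'(a), pr_Π''(ρ a))` take at most `J' + J''`
values. Match a fibre of `pr_Π'` with a fibre of `pr_Π''` until one of the two is exhausted, and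
recurse on the rest, where one value fewer is taken; in the countable setting the matching and
the rest can always be made of equal size.
-/

open Set

universe u

theorem ENat.le_and_le_or_le_and_le_of_add_eq {a a' b b' : ℕ∞} (h : a + a' = b + b') :
    (a ≤ b ∧ b' ≤ a') ∨ (b ≤ a ∧ a' ≤ b') := by
  by_contra! hne
  rcases lt_trichotomy a b with hab | rfl | hba
  · exact (ENat.add_lt_add hab (hne.1 hab.le)).ne h
  · exact (hne.1 le_rfl).not_gt (hne.2 le_rfl)
  · exact (ENat.add_lt_add hba (hne.2 hba.le)).ne h.symm

theorem Set.nonempty_equiv_of_encard_eq {α β : Type u} [Countable α] [Countable β]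
    {s : Set α} {t : Set β} (h : s.encard = t.encard) : Nonempty (s ≃ t) := by
  rw [← toENat_cardinalMk, ← toENat_cardinalMk,
    Cardinal.toENat_eq_iff_of_le_aleph0 Cardinal.mk_le_aleph0 Cardinal.mk_le_aleph0] at h
  exact Cardinal.eq.mp h

theorem Set.Infinite.exists_subset_encard_eq_infinite_diff {α : Type*} {s : Set α}
    (hs : s.Infinite) (k : ℕ∞) : ∃ w ⊆ s, w.encard = k ∧ (s \ w).Infinite := by
  obtain ⟨K, -, hK⟩ := exists_subset_encard_eq (show k ≤ (univ : Set ℕ).encard by simp)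
  set f := hs.natEmbedding s
  have hf : Function.Injective fun n => (f n : α) := Subtype.val_injective.comp f.injective
  have hodd : Function.Injective fun n : ℕ => 2 * n + 1 := fun m n h => by simpa using h
  refine ⟨(fun n => (f (2 * n) : α)) '' K, ?_, ?_, ?_⟩
  · rintro _ ⟨n, -, rfl⟩
    exact (f _).2
  · exact hK ▸ (hf.comp (mul_right_injective₀ two_ne_zero)).injOn.encard_image
  · refine (infinite_range_of_injective (hf.comp hodd)).mono ?_
    rintro _ ⟨n, rfl⟩
    refine ⟨(f _).2, ?_⟩
    rintro ⟨m, -, hm⟩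
    have : 2 * m = 2 * n + 1 := hf hm
    omega

theorem Set.exists_subset_encard_eq_encard_compl_eq {C D : Type*}
    (hCD : ENat.card C = ENat.card D) {G : Set C} {H : Set D} (hle : G.encard ≤ H.encard)
    (hle' : Hᶜ.encard ≤ Gᶜ.encard) : ∃ T ⊆ H, T.encard = G.encard ∧ Tᶜ.encard = Gᶜ.encard := by
  by_cases hG : G.encard = ⊤
  · have hH : H.Infinite := encard_eq_top_iff.mp (top_le_iff.mp (hG ▸ hle))
    obtain ⟨k, hk⟩ := exists_add_of_le hle'
    obtain ⟨W, hWH, hWk, hHW⟩ := hH.exists_subset_encard_eq_infinite_diff k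
    refine ⟨H \ W, sdiff_subset, hG ▸ hHW.encard_eq, ?_⟩
    rw [compl_sdiff, encard_union_eq (disjoint_compl_right_iff_subset.mpr hWH), hWk, hk, add_comm]
  · obtain ⟨T, hTH, hT⟩ := exists_subset_encard_eq hle
    refine ⟨T, hTH, hT, ENat.add_right_injective_of_ne_top hG ?_⟩
    have htot := (encard_add_encard_compl T).trans
      ((encard_univ D).trans (hCD.symm.trans (encard_univ C).symm))
    rwa [← encard_add_encard_compl G, hT] at htot

theorem Set.exists_subset_subset_nonempty_equiv {C D : Type u} [Countable C] [Countable D]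
    (hCD : Nonempty (C ≃ D)) (G : Set C) (H : Set D) :
    ∃ S ⊆ G, ∃ T ⊆ H, (S = G ∨ T = H) ∧ Nonempty (S ≃ T) ∧ Nonempty (↥Sᶜ ≃ ↥Tᶜ) := by
  have hcard : ENat.card C = ENat.card D := ENat.card_congr hCD.some
  have htot : G.encard + Gᶜ.encard = H.encard + Hᶜ.encard := by
    rw [encard_add_encard_compl, encard_add_encard_compl, encard_univ, encard_univ, hcard]
  rcases ENat.le_and_le_or_le_and_le_of_add_eq htot with ⟨hle, hle'⟩ | ⟨hle, hle'⟩
  · obtain ⟨T, hTH, hT, hTc⟩ := exists_subset_encard_eq_encard_compl_eq hcard hle hle'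
    exact ⟨G, subset_rfl, T, hTH, Or.inl rfl, nonempty_equiv_of_encard_eq hT.symm,
      nonempty_equiv_of_encard_eq hTc.symm⟩
  · obtain ⟨S, hSG, hS, hSc⟩ := exists_subset_encard_eq_encard_compl_eq hcard.symm hle hle'
    exact ⟨S, hSG, H, subset_rfl, Or.inr rfl, nonempty_equiv_of_encard_eq hS,
      nonempty_equiv_of_encard_eq hSc⟩

theorem Set.encard_range_restrict_le {C X : Type*} (g : C → X) (s : Set C) :
    (range fun c : s => g c).encard ≤ (range g).encard :=
  encard_mono (range_comp_subset_range Subtype.val g)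

theorem Set.encard_range_restrict_compl_fiber_add_one_le {C X : Type*} (g : C → X) (c₀ : C) :
    (range fun c : ↥(g ⁻¹' {g c₀})ᶜ => g c).encard + 1 ≤ (range g).encard := by
  rw [← encard_sdiff_singleton_add_one (mem_range_self c₀)]
  gcongr
  rintro _ ⟨c, rfl⟩
  exact ⟨mem_range_self _, c.2⟩

theorem exists_equiv_encard_range_prod_le_succ {C D X Y : Type*} {g : C → X} {h : D → Y}
    {S : Set C} {T : Set D} {x : X} {y : Y} (hS : ∀ c ∈ S, g c = x) (hT : ∀ d ∈ T, h d = y)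
    (e₁ : S ≃ T) (e₂ : ↥Sᶜ ≃ ↥Tᶜ) :
    ∃ ρ : C ≃ D, (range fun c => (g c, h (ρ c))).encard ≤
      (range fun c : ↥Sᶜ => (g c, h (e₂ c))).encard + 1 := by
  classical
  refine ⟨(Equiv.sumCompl (· ∈ S)).symm.trans ((e₁.sumCongr e₂).trans (Equiv.sumCompl (· ∈ T))),
    (encard_mono ?_).trans (encard_insert_le _ (x, y))⟩
  rintro _ ⟨c, rfl⟩
  by_cases hc : c ∈ S
  · left
    simp only [Equiv.trans_apply, Equiv.sumCompl_symm_apply_of_pos hc, Equiv.sumCongr_apply,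
      Sum.map_inl, Prod.mk.injEq]
    exact ⟨hS c hc, hT _ (e₁ ⟨c, hc⟩).2⟩
  · right
    exact ⟨⟨c, hc⟩, by
      simp only [Equiv.trans_apply, Equiv.sumCompl_symm_apply_of_neg hc, Equiv.sumCongr_apply,
        Sum.map_inr]
      rfl⟩

theorem exists_equiv_encard_range_prod_le_of_le {X Y : Type*} (n : ℕ) :
    ∀ {C D : Type u} [Countable C] [Countable D], Nonempty (C ≃ D) → ∀ (g : C → X) (h : D → Y),
      (range g).encard + (range h).encard ≤ n →
      ∃ ρ : C ≃ D, (range fun c => (g c, h (ρ c))).encard ≤ n := by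
  induction n with
  | zero =>
    intro C D _ _ hCD g h hn
    have : IsEmpty C := (by simpa using hn : IsEmpty C ∧ IsEmpty D).1
    exact ⟨hCD.some, by rw [range_eq_empty]; simp⟩
  | succ n ih =>
    intro C D _ _ hCD g h hn
    cases isEmpty_or_nonempty C
    · exact ⟨hCD.some, by rw [range_eq_empty]; simp⟩
    obtain ⟨c₀⟩ := ‹Nonempty C›
    obtain ⟨S, hSG, T, hTH, hfull, ⟨e₁⟩, ⟨e₂⟩⟩ :=
      exists_subset_subset_nonempty_equiv hCD (g ⁻¹' {g c₀}) (h ⁻¹' {h (hCD.some c₀)})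
    have hrest : (range fun c : ↥Sᶜ => g c).encard + (range fun d : ↥Tᶜ => h d).encard + 1
        ≤ (range g).encard + (range h).encard := by
      rcases hfull with rfl | rfl
      · have := encard_range_restrict_le h Tᶜ
        grw [add_right_comm, encard_range_restrict_compl_fiber_add_one_le, this]
      · have := encard_range_restrict_le g Sᶜ
        grw [add_assoc, encard_range_restrict_compl_fiber_add_one_le, this]
    obtain ⟨ρ, hρ⟩ := ih ⟨e₂⟩ (fun c : ↥Sᶜ => g c) (fun d : ↥Tᶜ => h d)
      ((ENat.add_le_add_iff_right ENat.one_ne_top).mp (hrest.trans (by simpa using hn)))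
    obtain ⟨ρ', hρ'⟩ := exists_equiv_encard_range_prod_le_succ (fun c hc => hSG hc)
      (fun d hd => hTH hd) e₁ ρ
    exact ⟨ρ', hρ'.trans (by push_cast; gcongr)⟩

theorem exists_equiv_encard_range_prod_le {C D : Type u} {X Y : Type*} [Countable C]
    [Countable D] (hCD : Nonempty (C ≃ D)) (g : C → X) (h : D → Y) :
    ∃ ρ : C ≃ D, (range fun c => (g c, h (ρ c))).encard ≤ (range g).encard + (range h).encard := by
  cases hn : (range g).encard + (range h).encard using ENat.recTopCoe with
  | top => exact ⟨hCD.some, le_top⟩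
  | coe n => exact exists_equiv_encard_range_prod_le_of_le n hCD g h hn.le

namespace Struc

open Classical in
noncomputable def proxy (S : Struc σ A) (ρ : Equiv.Perm A) (Q : Set (OneType σ)) (a b : A) : A :=
  if S.tp1 b ∈ Q then ρ a else a

open Classical in
noncomputable def rewire (S : Struc σ A) (ρ : Equiv.Perm A) (Q : Set (OneType σ)) :
    Struc σ A where
  unary := S.unary
  binary f a b := if a = b then S.binary f a b else S.binary f (S.proxy ρ Q a b) (S.proxy ρ Q b a)

noncomputable def count (S : Struc σ A) (P : Set (OneType σ)) (R : TwoType σ → Prop) (a : A) :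
    ℕ∞ :=
  {b | b ≠ a ∧ S.tp1 b ∈ P ∧ R (S.tp2 a b)}.encard

variable {S : Struc σ A} {ρ : Equiv.Perm A} {Q P P' : Set (OneType σ)} {R : TwoType σ → Prop}
  {a b : A}

theorem proxy_of_mem (h : S.tp1 b ∈ Q) : S.proxy ρ Q a b = ρ a := if_pos h

theorem proxy_of_notMem (h : S.tp1 b ∉ Q) : S.proxy ρ Q a b = a := if_neg h

theorem tp1_proxy (hρ : ∀ a, S.tp1 (ρ a) = S.tp1 a) (a b : A) :
    S.tp1 (S.proxy ρ Q a b) = S.tp1 a := by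
  unfold proxy; split_ifs <;> simp [hρ]

theorem proxy_ne_proxy (hρ : ∀ a, S.tp1 (ρ a) = S.tp1 a) (hab : a ≠ b) :
    S.proxy ρ Q a b ≠ S.proxy ρ Q b a := by
  intro h
  by_cases hQ : S.tp1 a ∈ Q ↔ S.tp1 b ∈ Q
  · unfold proxy at h; split_ifs at h <;> simp_all
  · exact hQ (by rw [← tp1_proxy hρ a b, h, tp1_proxy hρ])

theorem tp1_rewire (a : A) : (S.rewire ρ Q).tp1 a = S.tp1 a := by
  simp [tp1, rewire]

theorem tp2_rewire (hρ : ∀ a, S.tp1 (ρ a) = S.tp1 a) (hab : a ≠ b) :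
    (S.rewire ρ Q).tp2 a b = S.tp2 (S.proxy ρ Q a b) (S.proxy ρ Q b a) := by
  have ha := tp1_proxy (Q := Q) hρ a b
  have hb := tp1_proxy (Q := Q) hρ b a
  simp only [tp1, OneType.mk.injEq] at ha hb
  simp [tp2, rewire, hab, hab.symm, ha, hb]

theorem count_rewire_eq (hρ : ∀ a, S.tp1 (ρ a) = S.tp1 a) :
    (S.rewire ρ Q).count P R a =
      {c | c ≠ S.proxy ρ Q a c ∧ S.tp1 c ∈ P ∧ R (S.tp2 (S.proxy ρ Q a c) c)}.encard := by
  classical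
  set φ : Equiv.Perm A := if S.tp1 a ∈ Q then ρ else 1
  have hφ : ∀ b, φ b = S.proxy ρ Q b a := fun b => by
    unfold proxy; split_ifs with h <;> simp [φ, h]
  refine (congrArg encard ?_).trans (encard_preimage_of_bijective φ.bijective _)
  ext b
  have htp : S.tp1 (φ b) = S.tp1 b := by rw [hφ, tp1_proxy hρ]
  have hpb : S.proxy ρ Q a (φ b) = S.proxy ρ Q a b := by simp only [proxy, htp]
  simp only [mem_ofPred_eq, mem_preimage, hpb, htp, tp1_rewire]
  rw [hφ]
  by_cases hba : b = a
  · simp [hba]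
  · simp only [tp2_rewire hρ (Ne.symm hba), hba, proxy_ne_proxy hρ hba, ne_eq,
      not_false_eq_true, true_and]

theorem count_rewire_of_subset_compl (hρ : ∀ a, S.tp1 (ρ a) = S.tp1 a) (hP : P ⊆ Qᶜ) :
    (S.rewire ρ Q).count P R a = S.count P R a := by
  rw [count_rewire_eq hρ, count]
  congr 1
  ext c
  simp only [mem_ofPred_eq]
  refine ⟨fun ⟨h₁, h₂, h₃⟩ => ?_, fun ⟨h₁, h₂, h₃⟩ => ?_⟩ <;>
    rw [proxy_of_notMem (hP h₂)] at * <;> exact ⟨h₁, h₂, h₃⟩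

theorem count_rewire_of_subset (hρ : ∀ a, S.tp1 (ρ a) = S.tp1 a) (hP : P ⊆ Q) :
    (S.rewire ρ Q).count P R a = S.count P R (ρ a) := by
  rw [count_rewire_eq hρ, count]
  congr 1
  ext c
  simp only [mem_ofPred_eq]
  refine ⟨fun ⟨h₁, h₂, h₃⟩ => ?_, fun ⟨h₁, h₂, h₃⟩ => ?_⟩ <;>
    rw [proxy_of_mem (hP h₂)] at * <;> exact ⟨h₁, h₂, h₃⟩

theorem count_union (hPP' : Disjoint P P') :
    S.count (P ∪ P') R a = S.count P R a + S.count P' R a := by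
  rw [count, count, count, ← encard_union_eq]
  · congr 1
    ext b
    simp only [mem_ofPred_eq, mem_union]
    tauto
  · exact disjoint_left.mpr fun b hb hb' => disjoint_left.mp hPP' hb.2.1 hb'.2.1

theorem count_empty : S.count ∅ R a = 0 := by
  simp [count]

theorem count_rewire (hρ : ∀ a, S.tp1 (ρ a) = S.tp1 a) :
    (S.rewire ρ Q).count P R a = S.count (P \ Q) R a + S.count (P ∩ Q) R (ρ a) := by
  conv_lhs => rw [← sdiff_union_inter P Q]
  rw [count_union disjoint_sdiff_inter, count_rewire_of_subset_compl hρ (fun _ h => h.2),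
    count_rewire_of_subset hρ inter_subset_right]

theorem pr_apply_eq_count (S : Struc σ A) (P : Set (OneType σ)) (a : A) (μ : MsgType σ) :
    S.pr P a μ = S.count P (· = μ.1) a := rfl

theorem ct_apply_eq_count (S : Struc σ A) (P : Set (OneType σ)) (a : A)
    (f : {f : σ.B // f ∈ σ.counting}) : S.ct P a f = S.count P (fun τ => τ.rxy f.1 = true) a :=
  rfl

theorem Chromatic.rewire (hS : S.Chromatic) (hρ : ∀ a, S.tp1 (ρ a) = S.tp1 a) :
    (S.rewire ρ Q).Chromatic := by
  constructor
  · intro a a' hne hinv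
    rw [tp2_rewire hρ hne] at hinv
    simpa only [tp1_rewire, tp1_proxy hρ] using hS.1 _ _ (proxy_ne_proxy hρ hne) hinv
  · intro a a' a'' h₁ h₂ h₃ hinv₁ hinv₂ htp
    rw [tp1_rewire, tp1_rewire] at htp
    rw [tp2_rewire hρ h₁] at hinv₁
    rw [tp2_rewire hρ h₂] at hinv₂
    -- `a'` is represented by the same element in both edges since `a` and `a''` have one 1-type
    have hmid : S.proxy ρ Q a' a = S.proxy ρ Q a' a'' := by rw [proxy, proxy, htp]
    have hends : S.proxy ρ Q a a' ≠ S.proxy ρ Q a'' a' := by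
      unfold proxy; split_ifs <;> simp [h₃]
    refine hS.2 _ _ _ (hmid ▸ proxy_ne_proxy hρ h₁) (proxy_ne_proxy hρ h₂) hends (hmid ▸ hinv₁)
      hinv₂ ?_
    rw [tp1_proxy hρ, tp1_proxy hρ, htp]

theorem _root_.Realizes2.of_rewire {τ : TwoType σ} (hρ : ∀ a, S.tp1 (ρ a) = S.tp1 a)
    (h : Realizes2 (S.rewire ρ Q) τ) : Realizes2 S τ := by
  obtain ⟨a, b, hab, rfl⟩ := h
  exact ⟨_, _, proxy_ne_proxy hρ hab, (tp2_rewire hρ hab).symm⟩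

end Struc

section Grouping

variable {S : Struc σ A} {ρ : Equiv.Perm A} {P' P'' : Set (OneType σ)}

theorem Struc.pr_rewire_union (hρ : ∀ a, S.tp1 (ρ a) = S.tp1 a) (hdisj : Disjoint P' P'')
    (a : A) : (S.rewire ρ P'').pr (P' ∪ P'') a = S.pr P' a + S.pr P'' (ρ a) := by
  funext μ
  rw [Pi.add_apply, pr_apply_eq_count, count_rewire hρ, union_sdiff_right, hdisj.sdiff_eq_left,
    union_inter_cancel_right]
  rfl

theorem Struc.ct_rewire_union (hρ : ∀ a, S.tp1 (ρ a) = S.tp1 a) (hdisj : Disjoint P' P'')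
    (a : A) : (S.rewire ρ P'').ct (P' ∪ P'') a = S.ct P' a + S.ct P'' (ρ a) := by
  funext f
  rw [Pi.add_apply, ct_apply_eq_count, count_rewire hρ, union_sdiff_right, hdisj.sdiff_eq_left,
    union_inter_cancel_right]
  rfl

theorem Struc.ct_union (hdisj : Disjoint P' P'') (a : A) :
    S.ct (P' ∪ P'') a = S.ct P' a + S.ct P'' a :=
  funext fun f => count_union (R := fun τ => τ.rxy f.1 = true) hdisj

theorem piBApprox_rewire (hS : S.Chromatic) (hρ : ∀ a, S.tp1 (ρ a) = S.tp1 a)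
    (hdisj : Disjoint P' P'') {B : Set A} (hfix : ∀ a ∉ B, ρ a = a)
    (hct : ∀ a ∈ B, S.ct P'' (ρ a) = S.ct P'' a) :
    PiBApprox S (S.rewire ρ P'') (P' ∪ P'') B := by
  refine ⟨hS.rewire hρ, fun τ => Realizes2.of_rewire hρ,
    fun a => ⟨Struc.tp1_rewire a, ?_, fun ha => ?_, fun ha => ?_⟩⟩
  · funext μ
    have hc : Disjoint (P' ∪ P'')ᶜ P'' := disjoint_compl_left_iff_subset.mpr subset_union_right
    rw [Struc.pr_apply_eq_count, Struc.count_rewire hρ, hc.sdiff_eq_left, hc.inter_eq,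
      Struc.count_empty, add_zero]
    rfl
  · funext μ
    rw [Struc.pr_apply_eq_count, Struc.count_rewire hρ, hfix a ha,
      ← Struc.count_union disjoint_sdiff_inter, sdiff_union_inter]
    rfl
  · rw [Struc.ct_rewire_union hρ hdisj, hct a ha, Struc.ct_union hdisj]

end Grouping

theorem profile_grouping_general (σ : CSig) (A : Type) [Countable A] (S : Struc σ A)
    (hchr : S.Chromatic)
    (P' P'' : Set (OneType σ)) (hdisj : Disjoint P' P'')
    (B : Set A) (hB'' : PiGroup S P'' B)
    (J' J'' : ℕ)
    (hJ' : (S.pr P' '' B).encard = (J' : ℕ∞))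
    (hJ'' : (S.pr P'' '' B).encard = (J'' : ℕ∞)) :
    ∃ S'' : Struc σ A, PiBApprox S S'' (P' ∪ P'') B ∧
      (S''.pr (P' ∪ P'') '' B).encard ≤ ((J' + J'' : ℕ) : ℕ∞) := by
  classical
  obtain ⟨ρ₀, hρ₀⟩ := exists_equiv_encard_range_prod_le ⟨Equiv.refl B⟩
    (fun c : B => S.pr P' c) (fun c : B => S.pr P'' c)
  set ρ : Equiv.Perm A := Equiv.Perm.ofSubtype ρ₀
  have hρB : ∀ a (ha : a ∈ B), ρ a = ρ₀ ⟨a, ha⟩ := fun a ha =>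
    Equiv.Perm.ofSubtype_apply_of_mem ρ₀ ha
  have hfix : ∀ a ∉ B, ρ a = a := fun a ha => Equiv.Perm.ofSubtype_apply_of_not_mem ρ₀ ha
  have hρ : ∀ a, S.tp1 (ρ a) = S.tp1 a := by
    intro a
    by_cases ha : a ∈ B
    · rw [hρB a ha]; exact (hB'' _ (ρ₀ _).2 a ha).1
    · rw [hfix a ha]
  refine ⟨S.rewire ρ P'', piBApprox_rewire hchr hρ hdisj hfix
    fun a ha => (hρB a ha ▸ hB'' _ (ρ₀ _).2 a ha).2, ?_⟩
  calc ((S.rewire ρ P'').pr (P' ∪ P'') '' B).encard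
      ≤ (range fun c : B => (S.pr P' c, S.pr P'' (ρ₀ c))).encard := by
        rw [image_eq_range]
        refine (encard_mono ?_).trans (encard_image_le (fun p => p.1 + p.2) _)
        rintro _ ⟨c, rfl⟩
        exact ⟨_, mem_range_self c, by simp [Struc.pr_rewire_union hρ hdisj, hρB]⟩
    _ ≤ _ := hρ₀
    _ = ((J' + J'' : ℕ) : ℕ∞) := by rw [← image_eq_range, ← image_eq_range, hJ', hJ'']; push_cast; rfl

/-- Lemma 8 (profile grouping): if B is both a Π'-group realizing J' different
Π'-profiles and a Π''-group realizing J'' different Π''-profiles (Π', Π''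
disjoint and nonempty), then some (Π'∪Π'',B)-approximation realizes at most
J'+J'' different (Π'∪Π'')-profiles on B. -/
theorem profile_grouping (σ : CSig) (A : Type) [Countable A] (S : Struc σ A)
    (hfb : S.FinitelyBranching) (hchr : S.Chromatic)
    (P' P'' : Set (OneType σ)) (hdisj : Disjoint P' P'')
    (h1 : P'.Nonempty) (h2 : P''.Nonempty)
    (B : Set A) (hB' : PiGroup S P' B) (hB'' : PiGroup S P'' B)
    (J' J'' : ℕ)
    (hJ' : (S.pr P' '' B).encard = (J' : ℕ∞))
    (hJ'' : (S.pr P'' '' B).encard = (J'' : ℕ∞)) :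
    ∃ S'' : Struc σ A, PiBApprox S S'' (P' ∪ P'') B ∧
      (S''.pr (P' ∪ P'') '' B).encard ≤ ((J' + J'' : ℕ) : ℕ∞) :=
  profile_grouping_general σ A S hchr P' P'' hdisj B hB'' J' J'' hJ' hJ''
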